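/- arXiv:1308.2198 — 2 statements merged into one kernel-verified Lean document; each statement's English description precedes it below -/
import Mathlib

section
/- Pentagon identity: for Γ = ℤ² with ⟨γ₁,γ₂⟩ = 1, the Kontsevich–Soibelman transformations satisfy K_{γ₁} ∘ K_{γ₂} = K_{γ₂} ∘ K_{γ₁+γ₂} ∘ K_{γ₁} as birational transformations of the twisted torus. -/
/-- Action of `K_{γ₁}` on the coordinates `(x, y) = (X_{γ₁}, X_{γ₂})`:
`x ↦ x`, `y ↦ y(1-x)` (since `⟨γ₁,γ₂⟩ = 1`). -/
def K1 {F : Type*} [Field F] : F × F → F × F := fun p => (p.1, p.2 * (1 - p.1))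

/-- Action of `K_{γ₂}`: `x ↦ x(1-y)⁻¹`, `y ↦ y`. -/
def K2 {F : Type*} [Field F] : F × F → F × F := fun p => (p.1 / (1 - p.2), p.2)

/-- Action of `K_{γ₁+γ₂}`: since `X_{γ₁+γ₂} = -xy` by the twisted rule,
`x ↦ x(1+xy)⁻¹`, `y ↦ y(1+xy)`. -/
def K12 {F : Type*} [Field F] : F × F → F × F :=
  fun p => (p.1 / (1 + p.1 * p.2), p.2 * (1 + p.1 * p.2))

/-! Both sides send `(x, y)` to `(x / (1 - y + x y), y (1 - x))`. On the left this is immediate,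
since `1 - y (1 - x) = 1 - y + x y`. On the right, `K_{γ₁+γ₂}` rescales by
`1 + x y / (1 - y) = (1 - y + x y) / (1 - y)`, and `K_{γ₁}` then multiplies `y` by
`1 - x / (1 - y + x y) = (1 - x) (1 - y) / (1 - y + x y)`. -/

section Pentagon

variable {F : Type*} [Field F]

theorem K2_K1 (x y : F) : K2 (K1 (x, y)) = (x / (1 - y + x * y), y * (1 - x)) := by
  simp only [K1, K2]
  rw [show 1 - y * (1 - x) = 1 - y + x * y by ring]

theorem K12_K2 {x y : F} (hy : 1 - y ≠ 0) :
    K12 (K2 (x, y)) = (x / (1 - y + x * y), y * (1 - y + x * y) / (1 - y)) := by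
  have scale : 1 + x / (1 - y) * y = (1 - y + x * y) / (1 - y) := by field_simp
  simp only [K2, K12, scale, Prod.mk.injEq]
  constructor
  · rw [div_div_div_cancel_right₀ hy]
  · ring

theorem K1_K12_K2 {x y : F} (hy : 1 - y ≠ 0) (hxy : 1 - y + x * y ≠ 0) :
    K1 (K12 (K2 (x, y))) = (x / (1 - y + x * y), y * (1 - x)) := by
  have shift : 1 - x / (1 - y + x * y) = (1 - x) * (1 - y) / (1 - y + x * y) := by
    field_simp
    ring
  simp only [K12_K2 hy, K1, shift, Prod.mk.injEq, true_and]
  rw [div_mul_div_comm, div_eq_iff (mul_ne_zero hy hxy)]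
  ring

end Pentagon

/-- the pentagon identity
`K_{γ₁} K_{γ₂} = K_{γ₂} K_{γ₁+γ₂} K_{γ₁}` for `Γ = ℤ²` with `⟨γ₁,γ₂⟩ = 1`, verified on
the coordinates `x, y` as birational transformations (away from the vanishing loci
of the denominators `1 - y` and `1 - y + xy`). -/
theorem pentagon_identity {F : Type*} [Field F] (x y : F)
    (hy : 1 - y ≠ 0) (hxy : 1 - y + x * y ≠ 0) :
    K2 (K1 (x, y)) = K1 (K12 (K2 (x, y))) := by
  rw [K2_K1, K1_K12_K2 hy hxy]
end

section
/- Five-term (pentagon) identity for the Rogers dilogarithm: for 0 < x, y < 1, L(x) + L(y) = L(xy) + L(x(1−y)/(1−xy)) + L(y(1−x)/(1−xy)), where L(x) = Li₂(x) + (1/2)log(x)log(1−x). -/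
/-!
Fix `x ∈ (0,1)` and view `L(xy) + L(u) + L(v) - L(y)`, with `u = x(1-y)/(1-xy)` and
`v = y(1-x)/(1-xy)`, as a function of `y`. Since `L'(t) = -(log(1-t)/t + log t/(1-t))/2`, and
`u`, `v`, `1-u = (1-x)/(1-xy)`, `1-v = (1-y)/(1-xy)` are all products of powers of
`x, y, 1-x, 1-y, 1-xy`, its derivative is a combination of the logarithms of these five
numbers, and all coefficients cancel: the function is constant on `(0,1)`. As `y → 0⁺` we have
`xy, v → 0⁺` and `u → x`, while `L(t) → 0` as `t → 0⁺` because `Li₂(t) = O(t)` and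
`log t log(1-t) = O(t log t)`. So the constant is `L(x)`.
-/

/-- The dilogarithm `Li₂(x) = -∫₀ˣ log(1-t)/t dt` (on `[0,1)`). -/
noncomputable def Li2 (x : ℝ) : ℝ := -∫ t in (0:ℝ)..x, Real.log (1 - t) / t

/-- The Rogers dilogarithm `L(x) = Li₂(x) + (1/2) log x log(1-x)` on `(0,1)`. -/
noncomputable def RogersL (x : ℝ) : ℝ := Li2 x + (1 / 2) * Real.log x * Real.log (1 - x)

open Real Set Filter Topology MeasureTheory intervalIntegral

lemma abs_log_one_sub_le {t : ℝ} (h0 : 0 ≤ t) (h1 : t < 1) : |log (1 - t)| ≤ t / (1 - t) := by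
  simpa [abs_of_nonneg h0] using
    abs_log_sub_add_sum_range_le (x := t) (by rwa [abs_of_nonneg h0]) 0

lemma abs_log_one_sub_div_le {a t : ℝ} (ha : a < 1) (ht : t ∈ Ioc 0 a) :
    |log (1 - t) / t| ≤ (1 - a)⁻¹ := by
  obtain ⟨ht0, hta⟩ := ht
  rw [abs_div, abs_of_pos ht0, div_le_iff₀ ht0]
  calc |log (1 - t)| ≤ t / (1 - t) := abs_log_one_sub_le ht0.le (hta.trans_lt ha)
    _ ≤ t / (1 - a) := by gcongr
    _ = (1 - a)⁻¹ * t := by ring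

lemma intervalIntegrable_log_one_sub_div {a : ℝ} (h0 : 0 ≤ a) (h1 : a < 1) :
    IntervalIntegrable (fun t => log (1 - t) / t) volume 0 a := by
  refine (intervalIntegrable_const (c := (1 - a)⁻¹)).mono_fun'
    (by fun_prop : Measurable fun t : ℝ => log (1 - t) / t).aestronglyMeasurable ?_
  rw [uIoc_of_le h0]
  filter_upwards [ae_restrict_mem measurableSet_Ioc] with t ht
  exact abs_log_one_sub_div_le h1 ht

theorem hasDerivAt_Li2 {a : ℝ} (h0 : 0 < a) (h1 : a < 1) :
    HasDerivAt Li2 (-(log (1 - a) / a)) a :=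
  (integral_hasDerivAt_right (intervalIntegrable_log_one_sub_div h0.le h1)
    (Measurable.stronglyMeasurable (by fun_prop)).stronglyMeasurableAtFilter
    (((continuousAt_log (by linarith)).comp (by fun_prop)).div continuousAt_id h0.ne')).neg

lemma abs_Li2_le {y : ℝ} (hy : y ∈ Ioc 0 (1 / 2)) : |Li2 y| ≤ 2 * y := by
  have := norm_integral_le_of_norm_le_const (a := 0) (b := y) (C := 2)
    (f := fun t => log (1 - t) / t) fun t ht => by
      rw [uIoc_of_le hy.1.le] at ht
      rw [norm_eq_abs]
      exact (abs_log_one_sub_div_le (by norm_num) ⟨ht.1, ht.2.trans hy.2⟩).trans_eq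
        (by norm_num)
  simpa [Li2, abs_of_pos hy.1, mul_comm] using this

theorem tendsto_Li2_nhdsGT_zero : Tendsto Li2 (𝓝[>] 0) (𝓝 0) := by
  refine squeeze_zero_norm' ?_
    (((continuous_const_mul (2 : ℝ)).tendsto' 0 0 (mul_zero 2)).mono_left nhdsWithin_le_nhds)
  filter_upwards [Ioc_mem_nhdsGT (by norm_num : (0 : ℝ) < 1 / 2)] with y hy
  exact abs_Li2_le hy

lemma abs_log_mul_log_one_sub_le {y : ℝ} (hy : y ∈ Ioc 0 (1 / 2)) :
    |log y * log (1 - y)| ≤ 2 * |y * log y| := by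
  have hlog : |log (1 - y)| ≤ 2 * y :=
    calc |log (1 - y)| ≤ y / (1 - y) := abs_log_one_sub_le hy.1.le (by linarith [hy.2])
      _ ≤ y / (1 - 1 / 2) := by gcongr <;> linarith [hy.1, hy.2]
      _ = 2 * y := by ring
  rw [abs_mul, abs_mul, abs_of_pos hy.1]
  nlinarith [abs_nonneg (log y)]

lemma tendsto_log_mul_log_one_sub_nhdsGT_zero :
    Tendsto (fun y => log y * log (1 - y)) (𝓝[>] 0) (𝓝 0) := by
  have hmul : Tendsto (fun y => 2 * |y * log y|) (𝓝[>] 0) (𝓝 0) := by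
    simpa using ((continuous_mul_log.tendsto 0).abs.const_mul 2).mono_left nhdsWithin_le_nhds
  refine squeeze_zero_norm' ?_ hmul
  filter_upwards [Ioc_mem_nhdsGT (by norm_num : (0 : ℝ) < 1 / 2)] with y hy
  exact abs_log_mul_log_one_sub_le hy

theorem tendsto_RogersL_nhdsGT_zero : Tendsto RogersL (𝓝[>] 0) (𝓝 0) := by
  have h := tendsto_Li2_nhdsGT_zero.add (tendsto_log_mul_log_one_sub_nhdsGT_zero.const_mul (1 / 2))
  rw [mul_zero, add_zero] at h
  exact h.congr fun y => by rw [RogersL, mul_assoc]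

noncomputable def rogersLDeriv (t : ℝ) : ℝ := -(log (1 - t) / t + log t / (1 - t)) / 2

theorem hasDerivAt_RogersL {a : ℝ} (h0 : 0 < a) (h1 : a < 1) :
    HasDerivAt RogersL (rogersLDeriv a) a := by
  have hlog : HasDerivAt (fun t => log (1 - t)) (-(1 - a)⁻¹) a := by
    simpa [div_eq_mul_inv] using ((hasDerivAt_id' a).const_sub 1).log (sub_pos.2 h1).ne'
  refine ((hasDerivAt_Li2 h0 h1).add (((hasDerivAt_log h0.ne').const_mul (1 / 2)).mul hlog))
    |>.congr_deriv ?_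
  rw [rogersLDeriv]
  field_simp
  ring

lemma mul_one_sub_div_one_sub_mul_mem_Ioo {x y : ℝ} (hx : x ∈ Ioo 0 1) (hy : y ∈ Ioo 0 1) :
    x * (1 - y) / (1 - x * y) ∈ Ioo 0 1 := by
  obtain ⟨hx0, hx1⟩ := hx
  obtain ⟨hy0, hy1⟩ := hy
  have hd : 0 < 1 - x * y := by nlinarith
  constructor
  · exact div_pos (mul_pos hx0 (by linarith)) hd
  · rw [div_lt_one hd]; nlinarith

lemma rogersLDeriv_pentagon {x y : ℝ} (hx : x ∈ Ioo 0 1) (hy : y ∈ Ioo 0 1) :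
    x * rogersLDeriv (x * y)
      + x * (x - 1) / (1 - x * y) ^ 2 * rogersLDeriv (x * (1 - y) / (1 - x * y))
      + (1 - x) / (1 - x * y) ^ 2 * rogersLDeriv (y * (1 - x) / (1 - x * y))
      = rogersLDeriv y := by
  obtain ⟨hx0, hx1⟩ := hx
  obtain ⟨hy0, hy1⟩ := hy
  have h1x : 0 < 1 - x := by linarith
  have h1y : 0 < 1 - y := by linarith
  have hd : 0 < 1 - x * y := by nlinarith
  have hu : 1 - x * (1 - y) / (1 - x * y) = (1 - x) / (1 - x * y) := by
    rw [eq_div_iff hd.ne', sub_mul, div_mul_cancel₀ _ hd.ne']; ring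
  have hv : 1 - y * (1 - x) / (1 - x * y) = (1 - y) / (1 - x * y) := by
    rw [eq_div_iff hd.ne', sub_mul, div_mul_cancel₀ _ hd.ne']; ring
  simp only [rogersLDeriv, hu, hv, log_mul hx0.ne' hy0.ne',
    log_div (mul_pos hx0 h1y).ne' hd.ne', log_div (mul_pos hy0 h1x).ne' hd.ne',
    log_div h1x.ne' hd.ne', log_div h1y.ne' hd.ne', log_mul hx0.ne' h1y.ne',
    log_mul hy0.ne' h1x.ne']
  field_simp
  ring

noncomputable def pentagonDefect (x y : ℝ) : ℝ :=
  RogersL (x * y) + RogersL (x * (1 - y) / (1 - x * y)) + RogersL (y * (1 - x) / (1 - x * y))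
    - RogersL y

theorem hasDerivAt_pentagonDefect {x y : ℝ} (hx : x ∈ Ioo 0 1) (hy : y ∈ Ioo 0 1) :
    HasDerivAt (pentagonDefect x) 0 y := by
  have hd : 1 - x * y ≠ 0 := by nlinarith [hx.1, hx.2, hy.1, hy.2]
  have hxy : x * y ∈ Ioo 0 1 := ⟨mul_pos hx.1 hy.1, by nlinarith [hx.1, hx.2, hy.1, hy.2]⟩
  have hu := mul_one_sub_div_one_sub_mul_mem_Ioo hx hy
  have hv := mul_one_sub_div_one_sub_mul_mem_Ioo hy hx
  rw [mul_comm y x] at hv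
  have hden : HasDerivAt (fun z => 1 - x * z) (-x) y := by
    simpa using ((hasDerivAt_id' y).const_mul x).const_sub 1
  have hu' : HasDerivAt (fun z => x * (1 - z) / (1 - x * z)) (x * (x - 1) / (1 - x * y) ^ 2) y := by
    refine (((hasDerivAt_id' y).const_sub 1).const_mul x).div hden hd |>.congr_deriv ?_
    field_simp
    ring
  have hv' : HasDerivAt (fun z => z * (1 - x) / (1 - x * z)) ((1 - x) / (1 - x * y) ^ 2) y := by
    refine ((hasDerivAt_id' y).mul_const (1 - x)).div hden hd |>.congr_deriv ?_
    field_simp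
    ring
  have := (((hasDerivAt_RogersL hxy.1 hxy.2).comp y ((hasDerivAt_id' y).const_mul x)).add
    ((hasDerivAt_RogersL hu.1 hu.2).comp y hu')).add
    ((hasDerivAt_RogersL hv.1 hv.2).comp y hv') |>.sub (hasDerivAt_RogersL hy.1 hy.2)
  refine this.congr_deriv ?_
  rw [← rogersLDeriv_pentagon hx hy]
  ring

theorem tendsto_pentagonDefect_nhdsGT_zero {x : ℝ} (hx : x ∈ Ioo 0 1) :
    Tendsto (pentagonDefect x) (𝓝[>] 0) (𝓝 (RogersL x)) := by
  have hIoo : ∀ᶠ z in 𝓝[>] (0 : ℝ), z ∈ Ioo 0 1 := Ioo_mem_nhdsGT one_pos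
  have hu_cont : ContinuousAt (fun z => x * (1 - z) / (1 - x * z)) 0 :=
    (by fun_prop : ContinuousAt (fun z => x * (1 - z)) 0).div (by fun_prop) (by simp)
  have hv_cont : ContinuousAt (fun z => z * (1 - x) / (1 - x * z)) 0 :=
    (by fun_prop : ContinuousAt (fun z => z * (1 - x)) 0).div (by fun_prop) (by simp)
  have hxy : Tendsto (fun z => RogersL (x * z)) (𝓝[>] 0) (𝓝 0) :=
    tendsto_RogersL_nhdsGT_zero.comp <| tendsto_nhdsWithin_iff.2
      ⟨((continuous_const_mul x).tendsto' 0 0 (mul_zero x)).mono_left nhdsWithin_le_nhds,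
        hIoo.mono fun z hz => mul_pos hx.1 hz.1⟩
  have hu : Tendsto (fun z => RogersL (x * (1 - z) / (1 - x * z))) (𝓝[>] 0) (𝓝 (RogersL x)) :=
    (hasDerivAt_RogersL hx.1 hx.2).continuousAt.tendsto.comp
      (by simpa using hu_cont.tendsto.mono_left nhdsWithin_le_nhds)
  have hv : Tendsto (fun z => RogersL (z * (1 - x) / (1 - x * z))) (𝓝[>] 0) (𝓝 0) :=
    tendsto_RogersL_nhdsGT_zero.comp <| tendsto_nhdsWithin_iff.2
      ⟨by simpa using hv_cont.tendsto.mono_left nhdsWithin_le_nhds, hIoo.mono fun z hz => by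
        simpa [mul_comm z x] using (mul_one_sub_div_one_sub_mul_mem_Ioo hz hx).1⟩
  have h := ((hxy.add hu).add hv).sub tendsto_RogersL_nhdsGT_zero
  rw [zero_add, add_zero, sub_zero] at h
  exact h

theorem eqOn_Ioo_of_hasDerivAt_zero_of_tendsto {f : ℝ → ℝ} {a b c : ℝ}
    (hf : ∀ z ∈ Ioo a b, HasDerivAt f 0 z) (hlim : Tendsto f (𝓝[>] a) (𝓝 c)) :
    EqOn f (fun _ => c) (Ioo a b) := by
  intro y hy
  have hconst : ∀ z ∈ Ioo a b, f z = f y := fun z hz =>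
    isOpen_Ioo.is_const_of_deriv_eq_zero isPreconnected_Ioo
      (fun t ht => (hf t ht).differentiableAt.differentiableWithinAt) (fun t ht => (hf t ht).deriv)
      hz hy
  refine tendsto_nhds_unique (tendsto_const_nhds.congr' ?_) hlim
  filter_upwards [Ioo_mem_nhdsGT (hy.1.trans hy.2)] with z hz
  exact (hconst z hz).symm

/-- the five-term (pentagon) identity for the Rogers dilogarithm:
for `0 < x, y < 1`,
`L(x) + L(y) = L(xy) + L(x(1-y)/(1-xy)) + L(y(1-x)/(1-xy))`. -/
theorem rogers_pentagon (x y : ℝ) (hx0 : 0 < x) (hx1 : x < 1) (hy0 : 0 < y) (hy1 : y < 1) :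
    RogersL x + RogersL y =
      RogersL (x * y) + RogersL (x * (1 - y) / (1 - x * y)) +
        RogersL (y * (1 - x) / (1 - x * y)) := by
  have hx : x ∈ Ioo 0 1 := ⟨hx0, hx1⟩
  have hconst := eqOn_Ioo_of_hasDerivAt_zero_of_tendsto
    (fun _ hz => hasDerivAt_pentagonDefect hx hz) (tendsto_pentagonDefect_nhdsGT_zero hx)
    ⟨hy0, hy1⟩
  simp only [pentagonDefect] at hconst
  linarith
end
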